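/- For a vertex p of a triangulated surface in ℝ³ with neighboring vertices p_1,…,p_n in cyclic order, the negative gradient with respect to p of the total area of the triangles (p, p_i, p_{i+1}) equals (1/2)Σ_i (cot α_i + cot β_i)(p_i − p), where α_i, β_i are the angles opposite the edge pp_i in the two triangles containing it. -/

import Mathlib

open InnerProductGeometry

/-- The cross product on `ℝ³` with its euclidean inner-product structure. -/
noncomputable def cross3 (u v : EuclideanSpace ℝ (Fin 3)) :
    EuclideanSpace ℝ (Fin 3) :=
  WithLp.toLp 2 (crossProduct u v)

/-!
The area vector `N x = (a - x) × (b - x)` of a triangle of the star is affine in `x`,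
`N x = a × b - (a - b) × x`, and its linear part is skew-adjoint, so the gradient of `‖N‖` at `p`
is `‖N p‖⁻¹ • (a - b) × N p`. Expanding this vector triple product and using
`cot ∠(u, v) = ⟪u, v⟫ / ‖u × v‖` writes the gradient of one triangle's area as
`-(1/2) (cot α • (a - p) + cot β • (b - p))`; summing over the star and shifting the index of
the `β`-terms gives the formula.
-/

open RealInnerProductSpace Matrix

section NormGradient

variable {E F : Type*} [NormedAddCommGroup E] [NormedAddCommGroup F] [InnerProductSpace ℝ F]

theorem HasFDerivAt.norm [NormedSpace ℝ E] {f : E → F} {f' : E →L[ℝ] F} {x : E}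
    (hf : HasFDerivAt f f' x) (h0 : f x ≠ 0) :
    HasFDerivAt (fun y => ‖f y‖) (‖f x‖⁻¹ • (innerSL ℝ (f x)).comp f') x := by
  have hsqrt := (Real.hasDerivAt_sqrt (by positivity)).comp_hasFDerivAt x hf.norm_sq
  have hfun : (fun y => ‖f y‖) = (fun t => √t) ∘ fun y => ‖f y‖ ^ 2 := by
    funext y; simp
  rw [hfun]
  refine hsqrt.congr_fderiv ?_
  ext v
  simp only [Real.sqrt_sq (norm_nonneg _), _root_.smul_apply, ContinuousLinearMap.comp_apply,
    coe_innerSL_apply, nsmul_eq_mul, Nat.cast_ofNat, smul_eq_mul]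
  field_simp

variable [InnerProductSpace ℝ E] [CompleteSpace E] [CompleteSpace F]

theorem HasFDerivAt.hasGradientAt_norm {f : E → F} {f' : E →L[ℝ] F} {x : E}
    (hf : HasFDerivAt f f' x) (h0 : f x ≠ 0) :
    HasGradientAt (fun y => ‖f y‖) (‖f x‖⁻¹ • f'.adjoint (f x)) x := by
  rw [hasGradientAt_iff_hasFDerivAt]
  refine (hf.norm h0).congr_fderiv ?_
  ext v
  simp [ContinuousLinearMap.adjoint_inner_left]

theorem HasGradientAt.fun_sum {ι : Type*} (s : Finset ι) {f : ι → E → ℝ} {g : ι → E} {x : E}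
    (h : ∀ i ∈ s, HasGradientAt (f i) (g i) x) :
    HasGradientAt (fun y => ∑ i ∈ s, f i y) (∑ i ∈ s, g i) x := by
  rw [hasGradientAt_iff_hasFDerivAt, map_sum]
  exact HasFDerivAt.fun_sum fun i hi => (h i hi).hasFDerivAt

theorem HasGradientAt.const_mul {f : E → ℝ} {g : E} {x : E} (h : HasGradientAt f g x) (c : ℝ) :
    HasGradientAt (fun y => c * f y) (c • g) x := by
  rw [hasGradientAt_iff_hasFDerivAt, map_smul]
  exact h.hasFDerivAt.const_mul c

end NormGradient

local notation "E3" => EuclideanSpace ℝ (Fin 3)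

lemma EuclideanSpace.real_inner_eq_dotProduct {ι : Type*} [Fintype ι]
    (x y : EuclideanSpace ℝ ι) : ⟪x, y⟫ = x.ofLp ⬝ᵥ y.ofLp := by
  rw [EuclideanSpace.inner_eq_star_dotProduct, star_trivial, dotProduct_comm]

section Cross3

open EuclideanSpace

lemma cross3_anticomm (u v : E3) : cross3 u v = -cross3 v u := by
  simp only [cross3, ← cross_anticomm v u, WithLp.toLp_neg]

lemma cross3_sub_sub (a b x : E3) :
    cross3 (a - x) (b - x) = cross3 a b - cross3 (a - b) x := by
  simp only [cross3, WithLp.ofLp_sub, map_sub, LinearMap.sub_apply, cross_self, sub_zero,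
    ← WithLp.toLp_sub]
  congr 1
  rw [← cross_anticomm x b]
  abel

lemma cross3_sub_sub_rotate (a b c : E3) :
    cross3 (b - a) (c - a) = cross3 (c - b) (a - b) := by
  simp only [cross3, WithLp.ofLp_sub, map_sub, LinearMap.sub_apply, cross_self, sub_zero]
  congr 1
  rw [← cross_anticomm a b, ← cross_anticomm a c, ← cross_anticomm b c]
  abel

lemma cross3_cross3 (u v w : E3) : cross3 u (cross3 v w) = ⟪u, w⟫ • v - ⟪v, u⟫ • w := by
  simp only [cross3, real_inner_eq_dotProduct, cross_cross_eq_smul_sub_smul']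
  rfl

lemma inner_cross3_left (c v w : E3) : ⟪cross3 c v, w⟫ = -⟪v, cross3 c w⟫ := by
  simp only [real_inner_eq_dotProduct, cross3]
  rw [dotProduct_comm, triple_product_permutation w, triple_product_permutation v,
    ← cross_anticomm w, dotProduct_neg]

lemma norm_cross3_sq (u v : E3) : ‖cross3 u v‖ ^ 2 = ‖u‖ ^ 2 * ‖v‖ ^ 2 - ⟪u, v⟫ ^ 2 := by
  simp only [← real_inner_self_eq_norm_sq, real_inner_eq_dotProduct, cross3, cross_dot_cross,
    dotProduct_comm v.ofLp u.ofLp]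
  ring

lemma norm_cross3_eq_sin_angle_mul (u v : E3) :
    ‖cross3 u v‖ = Real.sin (angle u v) * (‖u‖ * ‖v‖) := by
  rw [sin_angle_mul_norm_mul_norm, ← Real.sqrt_sq (norm_nonneg (cross3 u v)), norm_cross3_sq,
    real_inner_self_eq_norm_sq, real_inner_self_eq_norm_sq]
  ring_nf

-- Also in the degenerate case, where `angle` is `π / 2` and `x / 0 = 0`.
lemma cot_angle_eq_inner_div_norm_cross3 (u v : E3) :
    Real.cot (angle u v) = ⟪u, v⟫ / ‖cross3 u v‖ := by
  rcases eq_or_ne (‖u‖ * ‖v‖) 0 with h | h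
  · obtain rfl | rfl : u = 0 ∨ v = 0 := by simpa using h
    · simp [Real.cot_eq_cos_div_sin]
    · simp [Real.cot_eq_cos_div_sin]
  · rw [Real.cot_eq_cos_div_sin, norm_cross3_eq_sin_angle_mul, ← cos_angle_mul_norm_mul_norm,
      mul_div_mul_right _ _ h]

noncomputable def cross3Left (c : E3) : E3 →L[ℝ] E3 :=
  LinearMap.toContinuousLinearMap
    ((WithLp.linearEquiv 2 ℝ (Fin 3 → ℝ)).symm.toLinearMap ∘ₗ crossProduct c.ofLp ∘ₗ
      (WithLp.linearEquiv 2 ℝ (Fin 3 → ℝ)).toLinearMap)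

@[simp] lemma cross3Left_apply (c v : E3) : cross3Left c v = cross3 c v := rfl

lemma adjoint_cross3Left (c : E3) : (cross3Left c).adjoint = -cross3Left c := by
  symm
  rw [ContinuousLinearMap.eq_adjoint_iff]
  intro v w
  simp [inner_cross3_left]

end Cross3

lemma hasGradientAt_norm_cross3_sub_sub (a b p : E3) (h : cross3 (a - p) (b - p) ≠ 0) :
    HasGradientAt (fun x => ‖cross3 (a - x) (b - x)‖)
      (‖cross3 (a - p) (b - p)‖⁻¹ • cross3 (a - b) (cross3 (a - p) (b - p))) p := by
  have hN : HasFDerivAt (fun x => cross3 (a - x) (b - x)) (-cross3Left (a - b)) p := by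
    rw [show (fun x => cross3 (a - x) (b - x)) = fun x => cross3 a b - cross3Left (a - b) x
      from funext fun x => cross3_sub_sub a b x]
    exact (cross3Left (a - b)).hasFDerivAt.const_sub _
  simpa [adjoint_cross3Left] using hN.hasGradientAt_norm h

theorem hasGradientAt_triangle_area (a b p : E3) (h : cross3 (a - p) (b - p) ≠ 0) :
    HasGradientAt (fun x => (1/2 : ℝ) * ‖cross3 (a - x) (b - x)‖)
      (-(1/2 : ℝ) • (Real.cot (angle (p - b) (a - b)) • (a - p)
        + Real.cot (angle (p - a) (b - a)) • (b - p))) p := by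
  have hNb : cross3 (p - b) (a - b) = cross3 (a - p) (b - p) := by
    rw [cross3_sub_sub_rotate p a b, cross3_sub_sub_rotate a b p]
  have hNa : cross3 (p - a) (b - a) = -cross3 (a - p) (b - p) := by
    rw [cross3_anticomm, cross3_sub_sub_rotate p a b]
  have hpb : ⟪p - b, a - b⟫ = -⟪a - b, b - p⟫ := by
    rw [← neg_sub b p, inner_neg_left, real_inner_comm]
  have hpa : ⟪p - a, b - a⟫ = ⟪a - p, a - b⟫ := by
    rw [← neg_sub a p, ← neg_sub a b, inner_neg_neg]
  convert (hasGradientAt_norm_cross3_sub_sub a b p h).const_mul (1/2) using 1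
  rw [cot_angle_eq_inner_div_norm_cross3, cot_angle_eq_inner_div_norm_cross3, hNb, hNa,
    norm_neg, hpb, hpa, cross3_cross3]
  module

/-- **The cotangent formula.**
Let `p` be a vertex of a triangulated surface in `ℝ³` whose star consists of
the nondegenerate triangles `(p, pᵢ, pᵢ₊₁)` (neighbours `pᵢ` in cyclic order,
indices mod `n`).  Let `αᵢ` be the angle at `pᵢ₊₁` in triangle
`(p, pᵢ, pᵢ₊₁)` and `βᵢ` the angle at `pᵢ₋₁` in triangle `(p, pᵢ₋₁, pᵢ)`
(the two angles opposite the edge `p pᵢ`).  Then the negative gradient with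
respect to `p` of the total area `Σᵢ (1/2)‖(pᵢ − x) × (pᵢ₊₁ − x)‖` equals
`(1/2) Σᵢ (cot αᵢ + cot βᵢ)(pᵢ − p)`. -/
theorem cotangent_formula_star
    (n : ℕ) [NeZero n] (p : EuclideanSpace ℝ (Fin 3))
    (q : ZMod n → EuclideanSpace ℝ (Fin 3))
    (hnd : ∀ i, cross3 (q i - p) (q (i+1) - p) ≠ 0)
    (α β : ZMod n → ℝ)
    (hα : ∀ i, α i = angle (p - q (i+1)) (q i - q (i+1)))
    (hβ : ∀ i, β i = angle (p - q (i-1)) (q i - q (i-1))) :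
    -gradient (fun x => ∑ i : ZMod n, (1/2 : ℝ) * ‖cross3 (q i - x) (q (i+1) - x)‖) p
      = (1/2 : ℝ) • ∑ i : ZMod n,
          (Real.cos (α i) / Real.sin (α i) + Real.cos (β i) / Real.sin (β i))
            • (q i - p) := by
  have hgrad : HasGradientAt
      (fun x => ∑ i : ZMod n, (1/2 : ℝ) * ‖cross3 (q i - x) (q (i+1) - x)‖)
      (∑ i : ZMod n, -(1/2 : ℝ) • (Real.cot (α i) • (q i - p)
        + Real.cot (β (i+1)) • (q (i+1) - p))) p :=
    HasGradientAt.fun_sum Finset.univ fun i _ => by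
      rw [hα, hβ, add_sub_cancel_right]
      exact hasGradientAt_triangle_area (q i) (q (i+1)) p (hnd i)
  have hshift : ∑ i : ZMod n, Real.cot (β (i+1)) • (q (i+1) - p)
      = ∑ i : ZMod n, Real.cot (β i) • (q i - p) :=
    Equiv.sum_comp (Equiv.addRight (1 : ZMod n)) fun i => Real.cot (β i) • (q i - p)
  rw [hgrad.gradient, ← Finset.smul_sum, neg_smul, neg_neg, Finset.sum_add_distrib, hshift,
    ← Finset.sum_add_distrib]
  simp only [← add_smul, Real.cot_eq_cos_div_sin]
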